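/- Let λ and μ be such that λ ≥ 0 is an ordinal and μ ≥ 0 a cardinal, and let L be one of the logics tΣ_{∞,λ}[μ] or tΠ_{∞,λ}[μ], where tΣ_{∞,λ}[μ] (resp. tΠ_{∞,λ}[μ]) is the union of tΣ_{κ,λ}[μ] (resp. tΠ_{κ,λ}[μ]) over all infinite cardinals κ. Let τ be a finite relational vocabulary and τ̱ = τ ∪ {P} for a new unary predicate P. Then for every L formula φ(x̄₁,x̄₂) over τ̱, there is an L reduction sequence over τ that is a Feferman–Vaught decomposition of φ(x̄₁,x̄₂) over the annotated disjoint union operation. -/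

import Mathlib

/-!
In the annotated disjoint union every element lies in exactly one of the two structures. Hence a
quantifier `∃ x` splits into `∃ x ∈ A₁ ∨ ∃ x ∈ A₂`, and once each variable of a quantifier-free
formula has been assigned a side, the formula is a finite Boolean combination of quantifier-free
formulae about `A₁` and about `A₂` (an atom mixing the two sides is simply false).

Pushing the quantifiers into the two sides one at a time would put them in front of
`tΣ`-formulae and leave the class. Instead, the existential block in front of a conjunction
`⋀ᵢ ψᵢ` is carried along as two pending blocks `b̄₁` in `A₁` and `b̄₂` in `A₂` while the `ψᵢ` are
decomposed, and is closed only at the conjunction: if `(Δ₁, Δ₂, β)` decomposes `⋀ᵢ ψᵢ` with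
`β` negation-free, then `⋁_{ζ ⊨ β} (∃ b̄₁ ⋀_{ζ(i,1)} Δ₁ᵢ) ∧ (∃ b̄₂ ⋀_{ζ(i,2)} Δ₂ᵢ)` decomposes
`∃ b̄₁ b̄₂ ⋀ᵢ ψᵢ`, because `β` is monotone. This keeps the new formulae in `tΣ` (dually, in `tΠ`),
at the price of conjunctions of arbitrary size, which is why the result lies in `tΣ_{∞,λ}` for a
larger `κ`.
-/

namespace FV

open Cardinal

/-- A (finite) relational vocabulary: a type of relation symbols with arities. -/
structure Vocab : Type 1 where
  Rel : Type
  arity : Rel → ℕ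

/-- A structure over a relational vocabulary. -/
structure Struc (τ : Vocab) : Type 1 where
  carrier : Type
  rel : ∀ R : τ.Rel, (Fin (τ.arity R) → carrier) → Prop

/-- Infinitary formulae in negation normal form over a relational vocabulary,
with free variables among `Fin n`. -/
inductive Formula (τ : Vocab) : ℕ → Type 1 where
  | tru {n : ℕ} : Formula τ n
  | fls {n : ℕ} : Formula τ n
  | rel {n : ℕ} (R : τ.Rel) (ts : Fin (τ.arity R) → Fin n) : Formula τ n
  | nrel {n : ℕ} (R : τ.Rel) (ts : Fin (τ.arity R) → Fin n) : Formula τ n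
  | eq {n : ℕ} (i j : Fin n) : Formula τ n
  | neq {n : ℕ} (i j : Fin n) : Formula τ n
  | iAnd {n : ℕ} (I : Type) (f : I → Formula τ n) : Formula τ n
  | iOr {n : ℕ} (I : Type) (f : I → Formula τ n) : Formula τ n
  | ex {n : ℕ} (φ : Formula τ (n+1)) : Formula τ n
  | all {n : ℕ} (φ : Formula τ (n+1)) : Formula τ n

/-- Binary conjunction (a conjunction of arity 2). -/
def Formula.and {τ : Vocab} {n : ℕ} (φ ψ : Formula τ n) : Formula τ n :=
  Formula.iAnd Bool (fun b => if b then φ else ψ)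

/-- Binary disjunction (a disjunction of arity 2). -/
def Formula.or {τ : Vocab} {n : ℕ} (φ ψ : Formula τ n) : Formula τ n :=
  Formula.iOr Bool (fun b => if b then φ else ψ)

/-- Quantifier-free formulae (in NNF, with finite conjunctions/disjunctions). -/
inductive IsQF {τ : Vocab} : ∀ {n : ℕ}, Formula τ n → Prop where
  | tru {n : ℕ} : IsQF (Formula.tru (τ := τ) (n := n))
  | fls {n : ℕ} : IsQF (Formula.fls (τ := τ) (n := n))
  | rel {n : ℕ} (R : τ.Rel) (ts : Fin (τ.arity R) → Fin n) : IsQF (Formula.rel R ts)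
  | nrel {n : ℕ} (R : τ.Rel) (ts : Fin (τ.arity R) → Fin n) : IsQF (Formula.nrel R ts)
  | eq {n : ℕ} (i j : Fin n) : IsQF (Formula.eq (τ := τ) i j)
  | neq {n : ℕ} (i j : Fin n) : IsQF (Formula.neq (τ := τ) i j)
  | iAnd {n : ℕ} (I : Type) (hI : Finite I) (f : I → Formula τ n)
      (h : ∀ i, IsQF (f i)) : IsQF (Formula.iAnd I f)
  | iOr {n : ℕ} (I : Type) (hI : Finite I) (f : I → Formula τ n)
      (h : ∀ i, IsQF (f i)) : IsQF (Formula.iOr I f)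

/-- Satisfaction of a formula in a structure under an assignment. -/
def Sat {τ : Vocab} (A : Struc τ) : ∀ {n : ℕ}, Formula τ n → (Fin n → A.carrier) → Prop
  | _, .tru, _ => True
  | _, .fls, _ => False
  | _, .rel R ts, v => A.rel R (fun i => v (ts i))
  | _, .nrel R ts, v => ¬ A.rel R (fun i => v (ts i))
  | _, .eq i j, v => v i = v j
  | _, .neq i j, v => v i ≠ v j
  | _, .iAnd I f, v => ∀ i : I, Sat A (f i) v
  | _, .iOr I f, v => ∃ i : I, Sat A (f i) v
  | _, .ex φ, v => ∃ a, Sat A φ (Fin.snoc v a)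
  | _, .all φ, v => ∀ a, Sat A φ (Fin.snoc v a)

/-- The empty assignment. -/
def emptyA {α : Type} : Fin 0 → α := fun i => i.elim0

/-- The (quantifier) rank of a formula: the supremum of the number of quantifiers
on any root-to-leaf path of its parse tree. -/
noncomputable def rank {τ : Vocab} : ∀ {n : ℕ}, Formula τ n → Cardinal
  | _, .iAnd I f => ⨆ i : I, rank (f i)
  | _, .iOr I f => ⨆ i : I, rank (f i)
  | _, .ex φ => rank φ + 1
  | _, .all φ => rank φ + 1
  | _, _ => 0

/-- The size of a formula (number of nodes of its parse tree), as a cardinal. -/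
noncomputable def sizeC {τ : Vocab} : ∀ {n : ℕ}, Formula τ n → Cardinal
  | _, .iAnd I f => 1 + Cardinal.sum (fun i : I => sizeC (f i))
  | _, .iOr I f => 1 + Cardinal.sum (fun i : I => sizeC (f i))
  | _, .ex φ => 1 + sizeC φ
  | _, .all φ => 1 + sizeC φ
  | _, _ => 1

mutual
/-- The class tΣ_{κ,λ} of formulae. -/
inductive TSigma (τ : Vocab) (κ : Cardinal) : Ordinal → ∀ {n : ℕ}, Formula τ n → Prop where
  | qf {n : ℕ} {φ : Formula τ n} : IsQF φ → TSigma τ κ 0 φ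
  | conj {n : ℕ} {lam : Ordinal} (I : Type) (f : I → Formula τ n)
      (hI : Cardinal.mk I < κ) (lam' : I → Ordinal) (hlt : ∀ i, lam' i < lam)
      (h : ∀ i, TPi τ κ (lam' i) (f i)) : TSigma τ κ lam (Formula.iAnd I f)
  | ex {n : ℕ} {lam : Ordinal} {φ : Formula τ (n+1)} :
      TSigma τ κ lam φ → TSigma τ κ lam (Formula.ex φ)

/-- The class tΠ_{κ,λ} of formulae. -/
inductive TPi (τ : Vocab) (κ : Cardinal) : Ordinal → ∀ {n : ℕ}, Formula τ n → Prop where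
  | qf {n : ℕ} {φ : Formula τ n} : IsQF φ → TPi τ κ 0 φ
  | disj {n : ℕ} {lam : Ordinal} (I : Type) (f : I → Formula τ n)
      (hI : Cardinal.mk I < κ) (lam' : I → Ordinal) (hlt : ∀ i, lam' i < lam)
      (h : ∀ i, TSigma τ κ (lam' i) (f i)) : TPi τ κ lam (Formula.iOr I f)
  | all {n : ℕ} {lam : Ordinal} {φ : Formula τ (n+1)} :
      TPi τ κ lam φ → TPi τ κ lam (Formula.all φ)
end

/-- tΣ_{∞,λ}: union of tΣ_{κ,λ} over all infinite cardinals κ. -/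
def TSigmaInf (τ : Vocab) (lam : Ordinal) {n : ℕ} (φ : Formula τ n) : Prop :=
  ∃ κ : Cardinal, ℵ₀ ≤ κ ∧ TSigma τ κ lam φ

/-- tΠ_{∞,λ}: union of tΠ_{κ,λ} over all infinite cardinals κ. -/
def TPiInf (τ : Vocab) (lam : Ordinal) {n : ℕ} (φ : Formula τ n) : Prop :=
  ∃ κ : Cardinal, ℵ₀ ≤ κ ∧ TPi τ κ lam φ

/-- The λ-fold exponential `tower` function (taking suprema at limits). -/
noncomputable def towerC (κ : Cardinal) (l : Ordinal) : Cardinal :=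
  Ordinal.limitRecOn l κ (fun _ ih => (2 : Cardinal) ^ ih)
    (fun o _ ih => ⨆ i : {o' : Ordinal // o' < o}, ih i.1 i.2)

/-- The n-fold exponential `tower` function on naturals. -/
def towerN : ℕ → Cardinal → Cardinal
  | 0, k => k
  | n+1, k => (2 : Cardinal) ^ towerN n k

open Classical in
/-- ρ(κ,λ) = tower(λ,κ) if κ > ω, else ω. -/
noncomputable def rho (κ : Cardinal) (lam : Ordinal) : Cardinal :=
  if ℵ₀ < κ then towerC κ lam else ℵ₀

/-- ∞-propositional formulae over a set `V` of propositional variables. -/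
inductive PropForm (V : Type) : Type 1 where
  | var (v : V) : PropForm V
  | not (p : PropForm V) : PropForm V
  | iAnd (I : Type) (f : I → PropForm V) : PropForm V
  | iOr (I : Type) (f : I → PropForm V) : PropForm V

/-- Binary conjunction of propositional formulae. -/
def PropForm.and {V : Type} (p q : PropForm V) : PropForm V :=
  PropForm.iAnd Bool (fun b => if b then p else q)

/-- Binary disjunction of propositional formulae. -/
def PropForm.or {V : Type} (p q : PropForm V) : PropForm V :=
  PropForm.iOr Bool (fun b => if b then p else q)

/-- Evaluation of an ∞-propositional formula under an assignment. -/
def PropForm.eval {V : Type} (ζ : V → Bool) : PropForm V → Prop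
  | .var v => ζ v = true
  | .not p => ¬ PropForm.eval ζ p
  | .iAnd _ f => ∀ i, PropForm.eval ζ (f i)
  | .iOr _ f => ∃ i, PropForm.eval ζ (f i)

/-- Negation-free ∞-propositional formulae. -/
inductive PropForm.NegFree {V : Type} : PropForm V → Prop where
  | var (v : V) : PropForm.NegFree (.var v)
  | iAnd (I : Type) (f : I → PropForm V) (h : ∀ i, PropForm.NegFree (f i)) :
      PropForm.NegFree (.iAnd I f)
  | iOr (I : Type) (f : I → PropForm V) (h : ∀ i, PropForm.NegFree (f i)) :
      PropForm.NegFree (.iOr I f)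

/-- Finitary (ordinary) propositional formulae. -/
inductive PropForm.Finitary {V : Type} : PropForm V → Prop where
  | var (v : V) : PropForm.Finitary (.var v)
  | not (p : PropForm V) (h : PropForm.Finitary p) : PropForm.Finitary (.not p)
  | iAnd (I : Type) (hI : Finite I) (f : I → PropForm V)
      (h : ∀ i, PropForm.Finitary (f i)) : PropForm.Finitary (.iAnd I f)
  | iOr (I : Type) (hI : Finite I) (f : I → PropForm V)
      (h : ∀ i, PropForm.Finitary (f i)) : PropForm.Finitary (.iOr I f)

/-- Size of an ∞-propositional formula. -/
noncomputable def PropForm.size {V : Type} : PropForm V → Cardinal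
  | .var _ => 1
  | .not p => 1 + PropForm.size p
  | .iAnd I f => 1 + Cardinal.sum (fun i : I => PropForm.size (f i))
  | .iOr I f => 1 + Cardinal.sum (fun i : I => PropForm.size (f i))

/-- A reduction sequence `D(x̄₁, x̄₂) = (Δ₁(x̄₁), Δ₂(x̄₂), β)` over τ. -/
structure RedSeq (τ : Vocab) (r₁ r₂ : ℕ) : Type 1 where
  I : Type
  Δ₁ : I → Formula τ r₁
  Δ₂ : I → Formula τ r₂
  β : PropForm (I × Fin 2)

/-- `(A₁, A₂, ā₁, ā₂)` is a model of the reduction sequence `D`. -/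
def RedSeq.Models {τ : Vocab} {r₁ r₂ : ℕ} (D : RedSeq τ r₁ r₂) (A₁ A₂ : Struc τ)
    (a₁ : Fin r₁ → A₁.carrier) (a₂ : Fin r₂ → A₂.carrier) : Prop :=
  ∃ ζ : D.I × Fin 2 → Bool, D.β.eval ζ ∧
    (∀ i : D.I, (ζ (i, 0) = true ↔ Sat A₁ (D.Δ₁ i) a₁)) ∧
    (∀ i : D.I, (ζ (i, 1) = true ↔ Sat A₂ (D.Δ₂ i) a₂))

/-- Size of a reduction sequence. -/
noncomputable def RedSeq.size {τ : Vocab} {r₁ r₂ : ℕ} (D : RedSeq τ r₁ r₂) : Cardinal :=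
  Cardinal.sum (fun i : D.I => sizeC (D.Δ₁ i)) +
    Cardinal.sum (fun i : D.I => sizeC (D.Δ₂ i)) + D.β.size

/-- The vocabulary τ̱ = τ ∪ {P} for a new unary predicate P (represented by `none`). -/
def annotV (τ : Vocab) : Vocab where
  Rel := Option τ.Rel
  arity := fun R => match R with
    | none => 1
    | some S => τ.arity S

/-- The annotated disjoint union of two τ-structures: their disjoint union,
expanded by interpreting the new unary predicate P as the universe of the first. -/
def adu {τ : Vocab} (A₁ A₂ : Struc τ) : Struc (annotV τ) where
  carrier := A₁.carrier ⊕ A₂.carrier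
  rel := fun R => match R with
    | none => fun v => (v ⟨0, Nat.one_pos⟩).isLeft = true
    | some S => fun v =>
        (∃ w : Fin (τ.arity S) → A₁.carrier, A₁.rel S w ∧ v = fun i => Sum.inl (w i)) ∨
        (∃ w : Fin (τ.arity S) → A₂.carrier, A₂.rel S w ∧ v = fun i => Sum.inr (w i))

/-- `D` is a Feferman–Vaught decomposition of `φ(x̄₁,x̄₂)` over annotated disjoint union. -/
def FVDecompADU {τ : Vocab} {r₁ r₂ : ℕ} (φ : Formula (annotV τ) (r₁ + r₂))
    (D : RedSeq τ r₁ r₂) : Prop :=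
  ∀ (A₁ A₂ : Struc τ) (a₁ : Fin r₁ → A₁.carrier) (a₂ : Fin r₂ → A₂.carrier),
    Sat (adu A₁ A₂) φ (Fin.append (fun i => Sum.inl (a₁ i)) (fun i => Sum.inr (a₂ i)))
      ↔ D.Models A₁ A₂ a₁ a₂

/-- `D` is a Feferman–Vaught decomposition of the sentence `φ` over the binary operation `op`. -/
def FVDecompOp {τ : Vocab} (op : Struc τ → Struc τ → Struc τ) (φ : Formula τ 0)
    (D : RedSeq τ 0 0) : Prop :=
  ∀ A₁ A₂ : Struc τ, Sat (op A₁ A₂) φ emptyA ↔ D.Models A₁ A₂ emptyA emptyA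

/-- A quantifier-free scalar (σ,τ)-interpretation. -/
structure QFInterp (σ τ : Vocab) : Type 1 where
  xiU : Formula σ 1
  xiR : ∀ R : τ.Rel, Formula σ (τ.arity R)
  hU : IsQF xiU
  hR : ∀ R : τ.Rel, IsQF (xiR R)

/-- The τ-structure interpreted in a σ-structure by a quantifier-free interpretation. -/
def QFInterp.app {σ τ : Vocab} (Ξ : QFInterp σ τ) (A : Struc σ) : Struc τ where
  carrier := { a : A.carrier // Sat A Ξ.xiU (fun _ => a) }
  rel := fun R v => Sat A (Ξ.xiR R) (fun i => (v i).1)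

/-- The quantifier-free sum-like binary operation defined by a (τ̱,τ)-interpretation. -/
def sumLike {τ : Vocab} (Ξ : QFInterp (annotV τ) τ) (A₁ A₂ : Struc τ) : Struc τ :=
  Ξ.app (adu A₁ A₂)

/-- Relabelling of free variables. -/
def relabel {τ : Vocab} : ∀ {m n : ℕ}, (Fin m → Fin n) → Formula τ m → Formula τ n
  | _, _, _, .tru => .tru
  | _, _, _, .fls => .fls
  | _, _, g, .rel R ts => .rel R (fun i => g (ts i))
  | _, _, g, .nrel R ts => .nrel R (fun i => g (ts i))
  | _, _, g, .eq i j => .eq (g i) (g j)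
  | _, _, g, .neq i j => .neq (g i) (g j)
  | _, _, g, .iAnd I f => .iAnd I (fun i => relabel g (f i))
  | _, _, g, .iOr I f => .iOr I (fun i => relabel g (f i))
  | _, _, g, .ex φ => .ex (relabel (Fin.snoc (fun i => Fin.castSucc (g i)) (Fin.last _)) φ)
  | _, _, g, .all φ => .all (relabel (Fin.snoc (fun i => Fin.castSucc (g i)) (Fin.last _)) φ)

/-- Negation, in negation normal form. -/
def nnfNeg {τ : Vocab} : ∀ {n : ℕ}, Formula τ n → Formula τ n
  | _, .tru => .fls
  | _, .fls => .tru
  | _, .rel R ts => .nrel R ts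
  | _, .nrel R ts => .rel R ts
  | _, .eq i j => .neq i j
  | _, .neq i j => .eq i j
  | _, .iAnd I f => .iOr I (fun i => nnfNeg (f i))
  | _, .iOr I f => .iAnd I (fun i => nnfNeg (f i))
  | _, .ex φ => .all (nnfNeg φ)
  | _, .all φ => .ex (nnfNeg φ)

/-- Finite conjunction of a tuple of formulae. -/
def finAnd {τ : Vocab} {n : ℕ} : ∀ {r : ℕ}, (Fin r → Formula τ n) → Formula τ n
  | 0, _ => .tru
  | r+1, f => (finAnd (fun i => f (Fin.castSucc i))).and (f (Fin.last r))

/-- A block of `k` existential quantifiers. -/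
def exBlock {τ : Vocab} : ∀ (k : ℕ) {r : ℕ}, Formula τ (r + k) → Formula τ r
  | 0, _, φ => φ
  | k+1, _, φ => exBlock k (Formula.ex φ)

/-- A block of `k` universal quantifiers. -/
def allBlock {τ : Vocab} : ∀ (k : ℕ) {r : ℕ}, Formula τ (r + k) → Formula τ r
  | 0, _, φ => φ
  | k+1, _, φ => allBlock k (Formula.all φ)

mutual
/-- The class tΣ_{(n,k)}: tΣ_n formulae all of whose quantifier blocks have length exactly k. -/
inductive SigNK (τ : Vocab) (k : ℕ) : ℕ → ∀ {r : ℕ}, Formula τ r → Prop where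
  | qf {r : ℕ} {φ : Formula τ r} : IsQF φ → SigNK τ k 0 φ
  | blk {r n : ℕ} (hn : 0 < n) (I : Type) (hI : Finite I) (f : I → Formula τ (r + k))
      (n' : I → ℕ) (hlt : ∀ i, n' i < n) (h : ∀ i, PiNK τ k (n' i) (f i)) :
      SigNK τ k n (exBlock k (Formula.iAnd I f))
/-- The class tΠ_{(n,k)}: tΠ_n formulae all of whose quantifier blocks have length exactly k. -/
inductive PiNK (τ : Vocab) (k : ℕ) : ℕ → ∀ {r : ℕ}, Formula τ r → Prop where
  | qf {r : ℕ} {φ : Formula τ r} : IsQF φ → PiNK τ k 0 φ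
  | blk {r n : ℕ} (hn : 0 < n) (I : Type) (hI : Finite I) (f : I → Formula τ (r + k))
      (n' : I → ℕ) (hlt : ∀ i, n' i < n) (h : ∀ i, SigNK τ k (n' i) (f i)) :
      PiNK τ k n (allBlock k (Formula.iOr I f))
end

/-- Partial isomorphism condition on a pair of tuples. -/
def PIso {τ : Vocab} (A₁ A₂ : Struc τ) (r : ℕ)
    (a₁ : Fin r → A₁.carrier) (a₂ : Fin r → A₂.carrier) : Prop :=
  (∀ i j : Fin r, a₁ i = a₁ j ↔ a₂ i = a₂ j) ∧
  (∀ (R : τ.Rel) (ts : Fin (τ.arity R) → Fin r),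
      A₁.rel R (fun l => a₁ (ts l)) ↔ A₂.rel R (fun l => a₂ (ts l)))

/-- The Duplicator has a winning strategy in the (n,k)-prefix game on the ordered pair
((A₁,ā₁),(A₂,ā₂)): in odd rounds the Spoiler picks a k-tuple in A₁ (and the Duplicator
answers in A₂), in even rounds the roles of the structures are swapped; the Duplicator wins
a play if the chosen tuples collectively form a partial isomorphism. -/
def DWinPrefix {τ : Vocab} (k : ℕ) : ℕ → (A₁ A₂ : Struc τ) → (r : ℕ) →
    (Fin r → A₁.carrier) → (Fin r → A₂.carrier) → Prop
  | 0, A₁, A₂, r, a₁, a₂ => PIso A₁ A₂ r a₁ a₂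
  | n+1, A₁, A₂, r, a₁, a₂ =>
      ∀ b₁ : Fin k → A₁.carrier, ∃ b₂ : Fin k → A₂.carrier,
        DWinPrefix k n A₂ A₁ (r + k) (Fin.append a₂ b₂) (Fin.append a₁ b₁)

/-- The Duplicator has a winning strategy in the (n,k)-tree-prefix game on the set
{(A₁,ā₁),(A₂,ā₂)}: in the first round the Spoiler picks a k-tuple in either structure, and
thereafter in the structure in which the Duplicator chose in the previous round. -/
def DWinTree {τ : Vocab} (k : ℕ) : ℕ → (A₁ A₂ : Struc τ) → (r : ℕ) →
    (Fin r → A₁.carrier) → (Fin r → A₂.carrier) → Prop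
  | 0, A₁, A₂, r, a₁, a₂ => PIso A₁ A₂ r a₁ a₂
  | n+1, A₁, A₂, r, a₁, a₂ =>
      (∀ b₁ : Fin k → A₁.carrier, ∃ b₂ : Fin k → A₂.carrier,
        DWinPrefix k n A₂ A₁ (r + k) (Fin.append a₂ b₂) (Fin.append a₁ b₁)) ∧
      (∀ b₂ : Fin k → A₂.carrier, ∃ b₁ : Fin k → A₁.carrier,
        DWinPrefix k n A₁ A₂ (r + k) (Fin.append a₁ b₁) (Fin.append a₂ b₂))

/-- (A₁,ā₁) ⇛_{(n,k)} (A₂,ā₂) : every tΣ_{(n,k)} formula true of (A₁,ā₁) is true of (A₂,ā₂). -/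
def TransferNK {τ : Vocab} (n k : ℕ) (A₁ A₂ : Struc τ) (r : ℕ)
    (a₁ : Fin r → A₁.carrier) (a₂ : Fin r → A₂.carrier) : Prop :=
  ∀ φ : Formula τ r, SigNK τ k n φ → Sat A₁ φ a₁ → Sat A₂ φ a₂

/-- (A₁,ā₁) ≡_{(n,k)} (A₂,ā₂) : agreement on all tΣ_{(n,k)} formulae. -/
def EquivNK {τ : Vocab} (n k : ℕ) (A₁ A₂ : Struc τ) (r : ℕ)
    (a₁ : Fin r → A₁.carrier) (a₂ : Fin r → A₂.carrier) : Prop :=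
  ∀ φ : Formula τ r, SigNK τ k n φ → (Sat A₁ φ a₁ ↔ Sat A₂ φ a₂)

namespace QFInterp

variable {σ τ : Vocab}

/-- The universe formula ξ_U applied at variable `i`. -/
def uAt (Ξ : QFInterp σ τ) {n : ℕ} (i : Fin n) : Formula σ n :=
  relabel (fun _ : Fin 1 => i) Ξ.xiU

/-- The universe formula ξ_U applied at the last (just-quantified) variable. -/
def uLast (Ξ : QFInterp σ τ) {n : ℕ} : Formula σ (n+1) :=
  Ξ.uAt (Fin.last n)

/-- Close a pending quantifier-block guard. -/
def closeG {n : ℕ} : Option (Bool × Formula σ n) → Formula σ n → Formula σ n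
  | none, r => r
  | some (true, g), r => g.and r
  | some (false, g), r => g.or r

/-- Block-wise translation Ξ(φ) of a formula under a quantifier-free interpretation,
with an accumulator carrying the pending universe-guard of the current quantifier block:
Ξ(R(z̄)) = ξ_R(z̄) ∧ ⋀ᵢ ξ_U(zᵢ); Ξ(¬R(z̄)) = ¬ξ_R(z̄) ∧ ⋀ᵢ ξ_U(zᵢ) (¬ξ_R in NNF);
Ξ commutes with conjunctions and disjunctions; Ξ(∃x̄ ⋀ᵢφᵢ) = ∃x̄(⋀ⱼ ξ_U(xⱼ) ∧ ⋀ᵢΞ(φᵢ));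
Ξ(∀x̄ ⋁ᵢφᵢ) = ∀x̄((⋁ⱼ ¬ξ_U(xⱼ)) ∨ ⋁ᵢΞ(φᵢ)) (¬ξ_U in NNF). -/
def trA (Ξ : QFInterp σ τ) : ∀ {n : ℕ}, Option (Bool × Formula σ n) → Formula τ n → Formula σ n
  | _, mode, .tru => closeG mode .tru
  | _, mode, .fls => closeG mode .fls
  | _, mode, .rel R ts =>
      closeG mode ((relabel ts (Ξ.xiR R)).and (finAnd (fun i => Ξ.uAt (ts i))))
  | _, mode, .nrel R ts =>
      closeG mode ((nnfNeg (relabel ts (Ξ.xiR R))).and (finAnd (fun i => Ξ.uAt (ts i))))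
  | _, mode, .eq i j => closeG mode ((Formula.eq i j).and ((Ξ.uAt i).and (Ξ.uAt j)))
  | _, mode, .neq i j => closeG mode ((Formula.neq i j).and ((Ξ.uAt i).and (Ξ.uAt j)))
  | _, some (true, g), .iAnd I f =>
      .iAnd (Option I) (fun o => o.elim g (fun i => Ξ.trA none (f i)))
  | _, some (false, g), .iOr I f =>
      .iOr (Option I) (fun o => o.elim g (fun i => Ξ.trA none (f i)))
  | _, mode, .iAnd I f => closeG mode (.iAnd I (fun i => Ξ.trA none (f i)))
  | _, mode, .iOr I f => closeG mode (.iOr I (fun i => Ξ.trA none (f i)))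
  | _, some (true, g), .ex φ =>
      .ex (Ξ.trA (some (true, (relabel Fin.castSucc g).and Ξ.uLast)) φ)
  | _, some (false, g), .all φ =>
      .all (Ξ.trA (some (false, (relabel Fin.castSucc g).or (nnfNeg Ξ.uLast))) φ)
  | _, mode, .ex φ => closeG mode (.ex (Ξ.trA (some (true, Ξ.uLast)) φ))
  | _, mode, .all φ => closeG mode (.all (Ξ.trA (some (false, nnfNeg Ξ.uLast)) φ))

/-- The translation Ξ(φ) of a formula. -/
def translate (Ξ : QFInterp σ τ) {n : ℕ} (φ : Formula τ n) : Formula σ n :=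
  Ξ.trA none φ

/-- The size |Ξ| of an interpretation: the sum of the sizes of its formulae. -/
noncomputable def size [Fintype τ.Rel] (Ξ : QFInterp σ τ) : Cardinal :=
  sizeC Ξ.xiU + ∑ R : τ.Rel, sizeC (Ξ.xiR R)

end QFInterp

section

variable {τ : Vocab}

theorem _root_.Sum.exists_map_eq_inl {ι α₁ α₂ β₁ β₂ : Type*} (f₁ : α₁ → β₁) (f₂ : α₂ → β₂)
    (t : ι → α₁ ⊕ α₂) (P : (ι → β₁) → Prop) :
    (∃ w, P w ∧ (fun i => Sum.map f₁ f₂ (t i)) = fun i => Sum.inl (w i)) ↔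
      ∃ j : {j : ι → α₁ // ∀ i, t i = Sum.inl (j i)}, P fun i => f₁ (j.1 i) := by
  constructor
  · rintro ⟨w, hw, heq⟩
    have h i : ∃ a, t i = Sum.inl a ∧ f₁ a = w i := by
      have := congrFun heq i
      rcases ht : t i with a | a <;> simp_all
    choose j hj hjw using h
    exact ⟨⟨j, hj⟩, by simpa [hjw]⟩
  · rintro ⟨⟨j, hj⟩, h⟩
    exact ⟨_, h, funext fun i => by simp [hj]⟩

theorem _root_.Sum.exists_map_eq_inr {ι α₁ α₂ β₁ β₂ : Type*} (f₁ : α₁ → β₁) (f₂ : α₂ → β₂)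
    (t : ι → α₁ ⊕ α₂) (P : (ι → β₂) → Prop) :
    (∃ w, P w ∧ (fun i => Sum.map f₁ f₂ (t i)) = fun i => Sum.inr (w i)) ↔
      ∃ j : {j : ι → α₂ // ∀ i, t i = Sum.inr (j i)}, P fun i => f₂ (j.1 i) := by
  constructor
  · rintro ⟨w, hw, heq⟩
    have h i : ∃ a, t i = Sum.inr a ∧ f₂ a = w i := by
      have := congrFun heq i
      rcases ht : t i with a | a <;> simp_all
    choose j hj hjw using h
    exact ⟨⟨j, hj⟩, by simpa [hjw]⟩
  · rintro ⟨⟨j, hj⟩, h⟩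
    exact ⟨_, h, funext fun i => by simp [hj]⟩

theorem _root_.Sum.map_eq_map_iff {α₁ α₂ β₁ β₂ : Type*} (f₁ : α₁ → β₁) (f₂ : α₂ → β₂)
    (x y : α₁ ⊕ α₂) :
    Sum.map f₁ f₂ x = Sum.map f₁ f₂ y ↔
      (∃ p : {p : α₁ × α₁ // x = .inl p.1 ∧ y = .inl p.2}, f₁ p.1.1 = f₁ p.1.2) ∨
      (∃ p : {p : α₂ × α₂ // x = .inr p.1 ∧ y = .inr p.2}, f₂ p.1.1 = f₂ p.1.2) := by
  cases x <;> cases y <;> simp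

theorem _root_.Fin.exists_snoc {α : Type*} {k : ℕ} {P : (Fin (k + 1) → α) → Prop} :
    (∃ b, P b) ↔ ∃ b x, P (Fin.snoc b x) :=
  ⟨fun ⟨b, hb⟩ => ⟨Fin.init b, b (Fin.last k), by rwa [Fin.snoc_init_self]⟩,
    fun ⟨_, _, h⟩ => ⟨_, h⟩⟩

theorem _root_.Fin.forall_snoc {α : Type*} {k : ℕ} {P : (Fin (k + 1) → α) → Prop} :
    (∀ b, P b) ↔ ∀ b x, P (Fin.snoc b x) :=
  ⟨fun h _ _ => h _, fun h b => by simpa using h (Fin.init b) (b (Fin.last k))⟩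

theorem _root_.Fin.append_of_fin_zero {α : Type*} {r : ℕ} (v : Fin r → α) (b : Fin 0 → α) :
    Fin.append v b = v := by
  simp [Fin.append_right_nil _ _ rfl]

theorem _root_.Fin.map_finSumFinEquiv_symm {m n : ℕ} {β₁ β₂ : Type*} (a₁ : Fin m → β₁)
    (a₂ : Fin n → β₂) (i : Fin (m + n)) :
    Sum.map a₁ a₂ (finSumFinEquiv.symm i) =
      Fin.append (fun i => Sum.inl (a₁ i)) (fun i => Sum.inr (a₂ i)) i := by
  refine Fin.addCases (fun i => ?_) (fun i => ?_) i <;> simp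

@[simp]
theorem sat_iAnd (A : Struc τ) {n : ℕ} (I : Type) (f : I → Formula τ n)
    (v : Fin n → A.carrier) : Sat A (.iAnd I f) v ↔ ∀ i, Sat A (f i) v :=
  Iff.rfl

@[simp]
theorem sat_iOr (A : Struc τ) {n : ℕ} (I : Type) (f : I → Formula τ n)
    (v : Fin n → A.carrier) : Sat A (.iOr I f) v ↔ ∃ i, Sat A (f i) v :=
  Iff.rfl

theorem sat_exBlock (A : Struc τ) (k : ℕ) {r : ℕ} (ψ : Formula τ (r + k))
    (v : Fin r → A.carrier) :
    Sat A (exBlock k ψ) v ↔ ∃ b : Fin k → A.carrier, Sat A ψ (Fin.append v b) := by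
  induction k with
  | zero => simp [exBlock, Fin.append_of_fin_zero]
  | succ k ih =>
    rw [exBlock, ih, Fin.exists_snoc]
    simp only [Fin.append_snoc]
    rfl

theorem sat_allBlock (A : Struc τ) (k : ℕ) {r : ℕ} (ψ : Formula τ (r + k))
    (v : Fin r → A.carrier) :
    Sat A (allBlock k ψ) v ↔ ∀ b : Fin k → A.carrier, Sat A ψ (Fin.append v b) := by
  induction k with
  | zero => simp [allBlock, Fin.append_of_fin_zero]
  | succ k ih =>
    rw [allBlock, ih, Fin.forall_snoc]
    simp only [Fin.append_snoc]
    rfl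

section Classes

variable {κ κ' : Cardinal}

mutual
theorem TSigma.mono_card (hκ : κ ≤ κ') {lam : Ordinal} {n : ℕ} {φ : Formula τ n} :
    TSigma τ κ lam φ → TSigma τ κ' lam φ
  | .qf h => .qf h
  | .conj I f hI lam' hlt h => .conj I f (hI.trans_le hκ) lam' hlt fun i => (h i).mono_card hκ
  | .ex h => .ex (h.mono_card hκ)

theorem TPi.mono_card (hκ : κ ≤ κ') {lam : Ordinal} {n : ℕ} {φ : Formula τ n} :
    TPi τ κ lam φ → TPi τ κ' lam φ
  | .qf h => .qf h
  | .disj I f hI lam' hlt h => .disj I f (hI.trans_le hκ) lam' hlt fun i => (h i).mono_card hκ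
  | .all h => .all (h.mono_card hκ)
end

theorem TSigma.exBlock {lam : Ordinal} {k r : ℕ} {ψ : Formula τ (r + k)} (h : TSigma τ κ lam ψ) :
    TSigma τ κ lam (exBlock k ψ) := by
  induction k with
  | zero => exact h
  | succ k ih => exact ih h.ex

theorem TPi.allBlock {lam : Ordinal} {k r : ℕ} {ψ : Formula τ (r + k)} (h : TPi τ κ lam ψ) :
    TPi τ κ lam (allBlock k ψ) := by
  induction k with
  | zero => exact h
  | succ k ih => exact ih h.all

theorem exists_aleph0_le_card_bound {J : Type} (κ : J → Cardinal) :
    ∃ K, ℵ₀ ≤ K ∧ #J < K ∧ ∀ j, κ j ≤ K := by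
  refine ⟨Order.succ (ℵ₀ + #J + sum κ), ?_, Order.lt_succ_iff.2 ?_,
    fun j => (le_sum κ j).trans (le_add_self.trans (Order.le_succ _))⟩
  · exact le_self_add.trans (le_self_add.trans (Order.le_succ _))
  · exact le_add_self.trans le_self_add

variable {J : Type} {r k : ℕ} {lam : Ordinal}

theorem TSigmaInf.exBlock_iAnd_of_isQF [Finite J] {c : J → Formula τ (r + k)}
    (hc : ∀ j, IsQF (c j)) : TSigmaInf τ 0 (exBlock k (.iAnd J c)) :=
  ⟨ℵ₀, le_rfl, (TSigma.qf (.iAnd J ‹_› c hc)).exBlock⟩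

theorem TPiInf.allBlock_iOr_of_isQF [Finite J] {c : J → Formula τ (r + k)}
    (hc : ∀ j, IsQF (c j)) : TPiInf τ 0 (allBlock k (.iOr J c)) :=
  ⟨ℵ₀, le_rfl, (TPi.qf (.iOr J ‹_› c hc)).allBlock⟩

theorem TSigmaInf.exBlock_iAnd {c : J → Formula τ (r + k)}
    (hc : ∀ j, ∃ l < lam, TPiInf τ l (c j)) : TSigmaInf τ lam (exBlock k (.iAnd J c)) := by
  choose l hl κ _ hc using hc
  obtain ⟨K, hK, hJK, hκK⟩ := exists_aleph0_le_card_bound κ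
  exact ⟨K, hK, (TSigma.conj J c hJK l hl fun j => (hc j).mono_card (hκK j)).exBlock⟩

theorem TPiInf.allBlock_iOr {c : J → Formula τ (r + k)}
    (hc : ∀ j, ∃ l < lam, TSigmaInf τ l (c j)) : TPiInf τ lam (allBlock k (.iOr J c)) := by
  choose l hl κ _ hc using hc
  obtain ⟨K, hK, hJK, hκK⟩ := exists_aleph0_le_card_bound κ
  exact ⟨K, hK, (TPi.disj J c hJK l hl fun j => (hc j).mono_card (hκK j)).allBlock⟩

end Classes

section Rank

universe u

variable {J : Type} {r k : ℕ}

theorem IsQF.rank_eq_zero {n : ℕ} {φ : Formula τ n} (h : IsQF φ) : rank.{u} φ = 0 := by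
  induction h with
  | iAnd I _ f _ ih => exact nonpos_iff_eq_zero.1 (ciSup_le' fun i => (ih i).le)
  | iOr I _ f _ ih => exact nonpos_iff_eq_zero.1 (ciSup_le' fun i => (ih i).le)
  | _ => rfl

theorem rank_exBlock (k : ℕ) (ψ : Formula τ (r + k)) :
    rank.{u} (exBlock k ψ) = rank ψ + k := by
  induction k with
  | zero => simp [exBlock]
  | succ k ih =>
    rw [exBlock, ih, rank]
    push_cast
    ring

theorem rank_allBlock (k : ℕ) (ψ : Formula τ (r + k)) :
    rank.{u} (allBlock k ψ) = rank ψ + k := by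
  induction k with
  | zero => simp [allBlock]
  | succ k ih =>
    rw [allBlock, ih, rank]
    push_cast
    ring

theorem rank_exBlock_iAnd_le {c : J → Formula τ (r + k)} {ρ : Cardinal.{u}}
    (h : ∀ j, rank (c j) ≤ ρ) : rank (exBlock k (.iAnd J c)) ≤ ρ + k := by
  rw [rank_exBlock]
  gcongr
  exact ciSup_le' h

theorem rank_allBlock_iOr_le {c : J → Formula τ (r + k)} {ρ : Cardinal.{u}}
    (h : ∀ j, rank (c j) ≤ ρ) : rank (allBlock k (.iOr J c)) ≤ ρ + k := by
  rw [rank_allBlock]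
  gcongr
  exact ciSup_le' h

end Rank

namespace PropForm

variable {V W : Type}

def map (h : V → W) : PropForm V → PropForm W
  | .var v => .var (h v)
  | .not p => .not (p.map h)
  | .iAnd I f => .iAnd I fun i => (f i).map h
  | .iOr I f => .iOr I fun i => (f i).map h

theorem eval_map (h : V → W) (ζ : W → Bool) (p : PropForm V) :
    (p.map h).eval ζ ↔ p.eval (ζ ∘ h) := by
  induction p with
  | var v => exact Iff.rfl
  | not p ih => exact not_congr ih
  | iAnd I f ih => exact forall_congr' ih
  | iOr I f ih => exact exists_congr ih

theorem eval_and (p q : PropForm V) (ζ : V → Bool) :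
    (p.and q).eval ζ ↔ p.eval ζ ∧ q.eval ζ :=
  Bool.forall_bool.trans and_comm

theorem eval_or (p q : PropForm V) (ζ : V → Bool) :
    (p.or q).eval ζ ↔ p.eval ζ ∨ q.eval ζ :=
  Bool.exists_bool.trans or_comm

namespace NegFree

theorem map (h : V → W) {p : PropForm V} (hp : p.NegFree) : (p.map h).NegFree := by
  induction hp with
  | var v => exact .var _
  | iAnd I f _ ih => exact .iAnd _ _ ih
  | iOr I f _ ih => exact .iOr _ _ ih

theorem and {p q : PropForm V} (hp : p.NegFree) (hq : q.NegFree) : (p.and q).NegFree :=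
  .iAnd _ _ fun b => by cases b <;> assumption

theorem or {p q : PropForm V} (hp : p.NegFree) (hq : q.NegFree) : (p.or q).NegFree :=
  .iOr _ _ fun b => by cases b <;> assumption

theorem eval_mono {p : PropForm V} (hp : p.NegFree) {ζ ζ' : V → Bool}
    (hle : ∀ v, ζ v = true → ζ' v = true) : p.eval ζ → p.eval ζ' := by
  induction hp with
  | var v => exact hle v
  | iAnd I f _ ih => exact fun h i => ih i (h i)
  | iOr I f _ ih => exact fun ⟨i, h⟩ => ⟨i, ih i h⟩

end NegFree

end PropForm

abbrev PairPred (τ : Vocab) (r₁ r₂ : ℕ) : Type 1 :=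
  ∀ A₁ A₂ : Struc τ, (Fin r₁ → A₁.carrier) → (Fin r₂ → A₂.carrier) → Prop

namespace RedSeq

variable {r₁ r₂ : ℕ}

def Forall (D : RedSeq τ r₁ r₂) (P : ∀ r, Formula τ r → Prop) : Prop :=
  ∀ i, P r₁ (D.Δ₁ i) ∧ P r₂ (D.Δ₂ i)

theorem Forall.mono {D : RedSeq τ r₁ r₂} {P Q : ∀ r, Formula τ r → Prop} (h : D.Forall P)
    (hPQ : ∀ r ψ, P r ψ → Q r ψ) : D.Forall Q :=
  fun i => ⟨hPQ _ _ (h i).1, hPQ _ _ (h i).2⟩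

def Defines (D : RedSeq τ r₁ r₂) (Φ : PairPred τ r₁ r₂) : Prop :=
  ∀ A₁ A₂ a₁ a₂, Φ A₁ A₂ a₁ a₂ ↔ D.Models A₁ A₂ a₁ a₂

theorem Defines.congr {D : RedSeq τ r₁ r₂} {Φ Ψ : PairPred τ r₁ r₂} (h : D.Defines Φ)
    (hΦΨ : ∀ A₁ A₂ a₁ a₂, Φ A₁ A₂ a₁ a₂ ↔ Ψ A₁ A₂ a₁ a₂) : D.Defines Ψ :=
  fun A₁ A₂ a₁ a₂ => (hΦΨ A₁ A₂ a₁ a₂).symm.trans (h A₁ A₂ a₁ a₂)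

section Truth

variable (D : RedSeq τ r₁ r₂) (A₁ A₂ : Struc τ) (a₁ : Fin r₁ → A₁.carrier)
  (a₂ : Fin r₂ → A₂.carrier)

open Classical in
noncomputable def truth : D.I × Fin 2 → Bool := fun q =>
  if q.2 = 0 then decide (Sat A₁ (D.Δ₁ q.1) a₁) else decide (Sat A₂ (D.Δ₂ q.1) a₂)

theorem truth_fst (i : D.I) : D.truth A₁ A₂ a₁ a₂ (i, 0) = true ↔ Sat A₁ (D.Δ₁ i) a₁ := by
  simp [truth]

theorem truth_snd (i : D.I) : D.truth A₁ A₂ a₁ a₂ (i, 1) = true ↔ Sat A₂ (D.Δ₂ i) a₂ := by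
  simp [truth]

theorem models_iff_eval : D.Models A₁ A₂ a₁ a₂ ↔ D.β.eval (D.truth A₁ A₂ a₁ a₂) := by
  refine ⟨fun ⟨ζ, hβ, h₁, h₂⟩ => ?_,
    fun h => ⟨_, h, D.truth_fst A₁ A₂ a₁ a₂, D.truth_snd A₁ A₂ a₁ a₂⟩⟩
  convert hβ using 1
  funext ⟨i, j⟩
  rw [Bool.eq_iff_iff]
  fin_cases j
  · exact (D.truth_fst A₁ A₂ a₁ a₂ i).trans (h₁ i).symm
  · exact (D.truth_snd A₁ A₂ a₁ a₂ i).trans (h₂ i).symm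

variable {D A₁ A₂ a₁ a₂}

theorem models_iff_exists_of_negFree (hβ : D.β.NegFree) :
    D.Models A₁ A₂ a₁ a₂ ↔ ∃ ζ, D.β.eval ζ ∧ (∀ i, ζ (i, 0) = true → Sat A₁ (D.Δ₁ i) a₁) ∧
      ∀ i, ζ (i, 1) = true → Sat A₂ (D.Δ₂ i) a₂ := by
  refine ⟨fun ⟨ζ, hζ, h₁, h₂⟩ => ⟨ζ, hζ, fun i => (h₁ i).1, fun i => (h₂ i).1⟩, ?_⟩
  rintro ⟨ζ, hζ, h₁, h₂⟩
  refine (D.models_iff_eval A₁ A₂ a₁ a₂).2 (hβ.eval_mono ?_ hζ)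
  rintro ⟨i, j⟩ h
  fin_cases j
  · exact (D.truth_fst A₁ A₂ a₁ a₂ i).2 (h₁ i h)
  · exact (D.truth_snd A₁ A₂ a₁ a₂ i).2 (h₂ i h)

theorem models_iff_forall_of_negFree (hβ : D.β.NegFree) :
    D.Models A₁ A₂ a₁ a₂ ↔ ∀ ζ, (∀ i, Sat A₁ (D.Δ₁ i) a₁ → ζ (i, 0) = true) →
      (∀ i, Sat A₂ (D.Δ₂ i) a₂ → ζ (i, 1) = true) → D.β.eval ζ := by
  refine ⟨fun h ζ h₁ h₂ => hβ.eval_mono ?_ ((D.models_iff_eval A₁ A₂ a₁ a₂).1 h), fun h => ?_⟩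
  · rintro ⟨i, j⟩ h
    fin_cases j
    · exact h₁ i ((D.truth_fst A₁ A₂ a₁ a₂ i).1 h)
    · exact h₂ i ((D.truth_snd A₁ A₂ a₁ a₂ i).1 h)
  · exact (D.models_iff_eval A₁ A₂ a₁ a₂).2
      (h _ (fun i => (D.truth_fst A₁ A₂ a₁ a₂ i).2) fun i => (D.truth_snd A₁ A₂ a₁ a₂ i).2)

end Truth

def iAnd (I : Type) (D : I → RedSeq τ r₁ r₂) : RedSeq τ r₁ r₂ where
  I := Σ i, (D i).I
  Δ₁ p := (D p.1).Δ₁ p.2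
  Δ₂ p := (D p.1).Δ₂ p.2
  β := .iAnd I fun i => (D i).β.map fun q => (⟨i, q.1⟩, q.2)

def iOr (I : Type) (D : I → RedSeq τ r₁ r₂) : RedSeq τ r₁ r₂ where
  I := Σ i, (D i).I
  Δ₁ p := (D p.1).Δ₁ p.2
  Δ₂ p := (D p.1).Δ₂ p.2
  β := .iOr I fun i => (D i).β.map fun q => (⟨i, q.1⟩, q.2)

def and (D₁ D₂ : RedSeq τ r₁ r₂) : RedSeq τ r₁ r₂ := iAnd Bool fun b => bif b then D₁ else D₂

def or (D₁ D₂ : RedSeq τ r₁ r₂) : RedSeq τ r₁ r₂ := iOr Bool fun b => bif b then D₁ else D₂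

def left (δ : Formula τ r₁) : RedSeq τ r₁ r₂ where
  I := Unit
  Δ₁ _ := δ
  Δ₂ _ := .tru
  β := .var ((), 0)

def right (δ : Formula τ r₂) : RedSeq τ r₁ r₂ where
  I := Unit
  Δ₁ _ := .tru
  Δ₂ _ := δ
  β := .var ((), 1)

def dnf (J : Type) (δ₁ : J → Formula τ r₁) (δ₂ : J → Formula τ r₂) : RedSeq τ r₁ r₂ where
  I := J
  Δ₁ := δ₁
  Δ₂ := δ₂
  β := .iOr J fun j => (PropForm.var (j, 0)).and (.var (j, 1))

def cnf (J : Type) (δ₁ : J → Formula τ r₁) (δ₂ : J → Formula τ r₂) : RedSeq τ r₁ r₂ where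
  I := J
  Δ₁ := δ₁
  Δ₂ := δ₂
  β := .iAnd J fun j => (PropForm.var (j, 0)).or (.var (j, 1))

theorem negFree_iAnd {I : Type} {D : I → RedSeq τ r₁ r₂} (h : ∀ i, (D i).β.NegFree) :
    (iAnd I D).β.NegFree :=
  .iAnd _ _ fun i => (h i).map _

theorem negFree_iOr {I : Type} {D : I → RedSeq τ r₁ r₂} (h : ∀ i, (D i).β.NegFree) :
    (iOr I D).β.NegFree :=
  .iOr _ _ fun i => (h i).map _

theorem negFree_and {D₁ D₂ : RedSeq τ r₁ r₂} (h₁ : D₁.β.NegFree) (h₂ : D₂.β.NegFree) :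
    (D₁.and D₂).β.NegFree :=
  negFree_iAnd fun b => by cases b <;> assumption

theorem negFree_or {D₁ D₂ : RedSeq τ r₁ r₂} (h₁ : D₁.β.NegFree) (h₂ : D₂.β.NegFree) :
    (D₁.or D₂).β.NegFree :=
  negFree_iOr fun b => by cases b <;> assumption

theorem negFree_dnf {J : Type} (δ₁ : J → Formula τ r₁) (δ₂ : J → Formula τ r₂) :
    (dnf J δ₁ δ₂).β.NegFree :=
  .iOr _ _ fun _ => (PropForm.NegFree.var _).and (.var _)

theorem negFree_cnf {J : Type} (δ₁ : J → Formula τ r₁) (δ₂ : J → Formula τ r₂) :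
    (cnf J δ₁ δ₂).β.NegFree :=
  .iAnd _ _ fun _ => (PropForm.NegFree.var _).or (.var _)

theorem Forall.iAnd {I : Type} {D : I → RedSeq τ r₁ r₂} {P : ∀ r, Formula τ r → Prop}
    (h : ∀ i, (D i).Forall P) : (iAnd I D).Forall P :=
  fun p => h p.1 p.2

theorem Forall.iOr {I : Type} {D : I → RedSeq τ r₁ r₂} {P : ∀ r, Formula τ r → Prop}
    (h : ∀ i, (D i).Forall P) : (iOr I D).Forall P :=
  fun p => h p.1 p.2

theorem Forall.and {D₁ D₂ : RedSeq τ r₁ r₂} {P : ∀ r, Formula τ r → Prop} (h₁ : D₁.Forall P)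
    (h₂ : D₂.Forall P) : (D₁.and D₂).Forall P := by
  rintro ⟨_ | _, i⟩
  exacts [h₂ i, h₁ i]

theorem Forall.or {D₁ D₂ : RedSeq τ r₁ r₂} {P : ∀ r, Formula τ r → Prop} (h₁ : D₁.Forall P)
    (h₂ : D₂.Forall P) : (D₁.or D₂).Forall P := by
  rintro ⟨_ | _, i⟩
  exacts [h₂ i, h₁ i]

variable {A₁ A₂ : Struc τ} {a₁ : Fin r₁ → A₁.carrier} {a₂ : Fin r₂ → A₂.carrier}

theorem models_iAnd {I : Type} {D : I → RedSeq τ r₁ r₂} :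
    (iAnd I D).Models A₁ A₂ a₁ a₂ ↔ ∀ i, (D i).Models A₁ A₂ a₁ a₂ := by
  simp only [models_iff_eval]
  exact forall_congr' fun i => PropForm.eval_map _ _ _

theorem models_iOr {I : Type} {D : I → RedSeq τ r₁ r₂} :
    (iOr I D).Models A₁ A₂ a₁ a₂ ↔ ∃ i, (D i).Models A₁ A₂ a₁ a₂ := by
  simp only [models_iff_eval]
  exact exists_congr fun i => PropForm.eval_map _ _ _

theorem models_and {D₁ D₂ : RedSeq τ r₁ r₂} :
    (D₁.and D₂).Models A₁ A₂ a₁ a₂ ↔ D₁.Models A₁ A₂ a₁ a₂ ∧ D₂.Models A₁ A₂ a₁ a₂ :=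
  models_iAnd.trans (Bool.forall_bool.trans and_comm)

theorem models_or {D₁ D₂ : RedSeq τ r₁ r₂} :
    (D₁.or D₂).Models A₁ A₂ a₁ a₂ ↔ D₁.Models A₁ A₂ a₁ a₂ ∨ D₂.Models A₁ A₂ a₁ a₂ :=
  models_iOr.trans (Bool.exists_bool.trans or_comm)

theorem models_left {δ : Formula τ r₁} :
    (left (r₂ := r₂) δ).Models A₁ A₂ a₁ a₂ ↔ Sat A₁ δ a₁ :=
  (models_iff_eval _ _ _ _ _).trans (truth_fst (left δ) A₁ A₂ a₁ a₂ ())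

theorem models_right {δ : Formula τ r₂} :
    (right (r₁ := r₁) δ).Models A₁ A₂ a₁ a₂ ↔ Sat A₂ δ a₂ :=
  (models_iff_eval _ _ _ _ _).trans (truth_snd (right δ) A₁ A₂ a₁ a₂ ())

theorem models_dnf {J : Type} {δ₁ : J → Formula τ r₁} {δ₂ : J → Formula τ r₂} :
    (dnf J δ₁ δ₂).Models A₁ A₂ a₁ a₂ ↔ ∃ j, Sat A₁ (δ₁ j) a₁ ∧ Sat A₂ (δ₂ j) a₂ := by
  rw [models_iff_eval]
  exact exists_congr fun j => (PropForm.eval_and _ _ _).trans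
    (and_congr (truth_fst (dnf J δ₁ δ₂) _ _ _ _ j) (truth_snd (dnf J δ₁ δ₂) _ _ _ _ j))

theorem models_cnf {J : Type} {δ₁ : J → Formula τ r₁} {δ₂ : J → Formula τ r₂} :
    (cnf J δ₁ δ₂).Models A₁ A₂ a₁ a₂ ↔ ∀ j, Sat A₁ (δ₁ j) a₁ ∨ Sat A₂ (δ₂ j) a₂ := by
  rw [models_iff_eval]
  exact forall_congr' fun j => (PropForm.eval_or _ _ _).trans
    (or_congr (truth_fst (cnf J δ₁ δ₂) _ _ _ _ j) (truth_snd (cnf J δ₁ δ₂) _ _ _ _ j))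

theorem Defines.iAnd {I : Type} {D : I → RedSeq τ r₁ r₂} {Φ : I → PairPred τ r₁ r₂}
    (h : ∀ i, (D i).Defines (Φ i)) :
    (iAnd I D).Defines fun A₁ A₂ a₁ a₂ => ∀ i, Φ i A₁ A₂ a₁ a₂ :=
  fun _ _ _ _ => (forall_congr' fun i => h i _ _ _ _).trans models_iAnd.symm

theorem Defines.iOr {I : Type} {D : I → RedSeq τ r₁ r₂} {Φ : I → PairPred τ r₁ r₂}
    (h : ∀ i, (D i).Defines (Φ i)) :
    (iOr I D).Defines fun A₁ A₂ a₁ a₂ => ∃ i, Φ i A₁ A₂ a₁ a₂ :=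
  fun _ _ _ _ => (exists_congr fun i => h i _ _ _ _).trans models_iOr.symm

variable {k₁ k₂ : ℕ}

def exClose (k₁ k₂ : ℕ) (D : RedSeq τ (r₁ + k₁) (r₂ + k₂)) : RedSeq τ r₁ r₂ :=
  dnf {ζ : D.I × Fin 2 → Bool // D.β.eval ζ}
    (fun ζ => exBlock k₁ (.iAnd {i // ζ.1 (i, 0) = true} fun i => D.Δ₁ i))
    (fun ζ => exBlock k₂ (.iAnd {i // ζ.1 (i, 1) = true} fun i => D.Δ₂ i))

def allClose (k₁ k₂ : ℕ) (D : RedSeq τ (r₁ + k₁) (r₂ + k₂)) : RedSeq τ r₁ r₂ :=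
  cnf {ζ : D.I × Fin 2 → Bool // ¬ D.β.eval ζ}
    (fun ζ => allBlock k₁ (.iOr {i // ζ.1 (i, 0) = false} fun i => D.Δ₁ i))
    (fun ζ => allBlock k₂ (.iOr {i // ζ.1 (i, 1) = false} fun i => D.Δ₂ i))

theorem models_exClose {D : RedSeq τ (r₁ + k₁) (r₂ + k₂)} (hβ : D.β.NegFree) :
    (D.exClose k₁ k₂).Models A₁ A₂ a₁ a₂ ↔
      ∃ b₁ b₂, D.Models A₁ A₂ (Fin.append a₁ b₁) (Fin.append a₂ b₂) := by
  simp only [exClose, models_dnf, sat_exBlock, sat_iAnd, Subtype.forall,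
    models_iff_exists_of_negFree hβ]
  constructor
  · rintro ⟨⟨ζ, hζ⟩, ⟨b₁, hb₁⟩, ⟨b₂, hb₂⟩⟩
    exact ⟨b₁, b₂, ζ, hζ, hb₁, hb₂⟩
  · rintro ⟨b₁, b₂, ζ, hζ, hb₁, hb₂⟩
    exact ⟨⟨ζ, hζ⟩, ⟨b₁, hb₁⟩, ⟨b₂, hb₂⟩⟩

theorem models_allClose {D : RedSeq τ (r₁ + k₁) (r₂ + k₂)} (hβ : D.β.NegFree) :
    (D.allClose k₁ k₂).Models A₁ A₂ a₁ a₂ ↔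
      ∀ b₁ b₂, D.Models A₁ A₂ (Fin.append a₁ b₁) (Fin.append a₂ b₂) := by
  simp only [allClose, models_cnf, sat_allBlock, sat_iOr, Subtype.exists,
    models_iff_forall_of_negFree hβ]
  constructor
  · intro h b₁ b₂ ζ h₁ h₂
    by_contra hζ
    rcases h ⟨ζ, hζ⟩ with h' | h'
    · obtain ⟨i, hi, hsat⟩ := h' b₁
      simp [h₁ i hsat] at hi
    · obtain ⟨i, hi, hsat⟩ := h' b₂
      simp [h₂ i hsat] at hi
  · rintro h ⟨ζ, hζ⟩
    by_contra! ⟨⟨b₁, hb₁⟩, ⟨b₂, hb₂⟩⟩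
    refine hζ (h b₁ b₂ ζ (fun i hsat => ?_) (fun i hsat => ?_))
    · by_contra hi
      exact hb₁ i (by simpa using hi) hsat
    · by_contra hi
      exact hb₂ i (by simpa using hi) hsat

theorem Defines.exClose {D : RedSeq τ (r₁ + k₁) (r₂ + k₂)} (hβ : D.β.NegFree)
    {Φ : PairPred τ (r₁ + k₁) (r₂ + k₂)} (hD : D.Defines Φ) :
    (D.exClose k₁ k₂).Defines fun A₁ A₂ a₁ a₂ =>
      ∃ b₁ b₂, Φ A₁ A₂ (Fin.append a₁ b₁) (Fin.append a₂ b₂) :=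
  fun _ _ _ _ => (exists₂_congr fun _ _ => hD _ _ _ _).trans (models_exClose hβ).symm

theorem Defines.allClose {D : RedSeq τ (r₁ + k₁) (r₂ + k₂)} (hβ : D.β.NegFree)
    {Φ : PairPred τ (r₁ + k₁) (r₂ + k₂)} (hD : D.Defines Φ) :
    (D.allClose k₁ k₂).Defines fun A₁ A₂ a₁ a₂ =>
      ∀ b₁ b₂, Φ A₁ A₂ (Fin.append a₁ b₁) (Fin.append a₂ b₂) :=
  fun _ _ _ _ => (forall₂_congr fun _ _ => hD _ _ _ _).trans (models_allClose hβ).symm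

theorem Forall.exClose {D : RedSeq τ (r₁ + k₁) (r₂ + k₂)} {P Q : ∀ r, Formula τ r → Prop}
    (hD : D.Forall P) (hPQ : ∀ r k (s : D.I → Prop) (c : {i // s i} → Formula τ (r + k)),
      (∀ j, P (r + k) (c j)) → k ≤ k₁ + k₂ → Q r (exBlock k (.iAnd {i // s i} c))) :
    (D.exClose k₁ k₂).Forall Q :=
  fun _ => ⟨hPQ _ _ _ _ (fun i => (hD i).1) (Nat.le_add_right _ _),
    hPQ _ _ _ _ (fun i => (hD i).2) (Nat.le_add_left _ _)⟩

theorem Forall.allClose {D : RedSeq τ (r₁ + k₁) (r₂ + k₂)} {P Q : ∀ r, Formula τ r → Prop}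
    (hD : D.Forall P) (hPQ : ∀ r k (s : D.I → Prop) (c : {i // s i} → Formula τ (r + k)),
      (∀ j, P (r + k) (c j)) → k ≤ k₁ + k₂ → Q r (allBlock k (.iOr {i // s i} c))) :
    (D.allClose k₁ k₂).Forall Q :=
  fun _ => ⟨hPQ _ _ _ _ (fun i => (hD i).1) (Nat.le_add_right _ _),
    hPQ _ _ _ _ (fun i => (hD i).2) (Nat.le_add_left _ _)⟩

end RedSeq

def QFDefinable {r₁ r₂ : ℕ} (Φ : PairPred τ r₁ r₂) : Prop :=
  ∃ D : RedSeq τ r₁ r₂, Finite D.I ∧ D.Forall (fun _ ψ => IsQF ψ) ∧ D.β.NegFree ∧ D.Defines Φ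

namespace QFDefinable

variable {r₁ r₂ : ℕ} {Φ Ψ : PairPred τ r₁ r₂}

theorem congr (h : QFDefinable Φ) (hΦΨ : ∀ A₁ A₂ a₁ a₂, Φ A₁ A₂ a₁ a₂ ↔ Ψ A₁ A₂ a₁ a₂) :
    QFDefinable Ψ :=
  let ⟨D, hfin, hqf, hβ, hD⟩ := h
  ⟨D, hfin, hqf, hβ, hD.congr hΦΨ⟩

theorem left {δ : Formula τ r₁} (hδ : IsQF δ) :
    QFDefinable (r₂ := r₂) fun A₁ _ a₁ _ => Sat A₁ δ a₁ :=
  ⟨.left δ, inferInstanceAs (Finite Unit), fun _ => ⟨hδ, .tru⟩, .var _,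
    fun _ _ _ _ => RedSeq.models_left.symm⟩

theorem right {δ : Formula τ r₂} (hδ : IsQF δ) :
    QFDefinable (r₁ := r₁) fun _ A₂ _ a₂ => Sat A₂ δ a₂ :=
  ⟨.right δ, inferInstanceAs (Finite Unit), fun _ => ⟨.tru, hδ⟩, .var _,
    fun _ _ _ _ => RedSeq.models_right.symm⟩

theorem iAnd {I : Type} [Finite I]
    {Φ : I → PairPred τ r₁ r₂} (h : ∀ i, QFDefinable (Φ i)) :
    QFDefinable fun A₁ A₂ a₁ a₂ => ∀ i, Φ i A₁ A₂ a₁ a₂ := by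
  choose D hfin hqf hβ hD using h
  exact ⟨.iAnd I D, inferInstanceAs (Finite (Σ i, (D i).I)), .iAnd hqf,
    RedSeq.negFree_iAnd hβ, .iAnd hD⟩

theorem iOr {I : Type} [Finite I]
    {Φ : I → PairPred τ r₁ r₂} (h : ∀ i, QFDefinable (Φ i)) :
    QFDefinable fun A₁ A₂ a₁ a₂ => ∃ i, Φ i A₁ A₂ a₁ a₂ := by
  choose D hfin hqf hβ hD using h
  exact ⟨.iOr I D, inferInstanceAs (Finite (Σ i, (D i).I)), .iOr hqf,
    RedSeq.negFree_iOr hβ, .iOr hD⟩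

theorem const (p : Prop) : QFDefinable (τ := τ) (r₁ := r₁) (r₂ := r₂) fun _ _ _ _ => p := by
  by_cases hp : p
  · exact (iAnd (I := Empty) (Φ := nofun) nofun).congr fun _ _ _ _ => by simp [hp]
  · exact (iOr (I := Empty) (Φ := nofun) nofun).congr fun _ _ _ _ => by simp [hp]

theorem and (hΦ : QFDefinable Φ) (hΨ : QFDefinable Ψ) :
    QFDefinable fun A₁ A₂ a₁ a₂ => Φ A₁ A₂ a₁ a₂ ∧ Ψ A₁ A₂ a₁ a₂ :=
  (iAnd (Φ := fun b => bif b then Φ else Ψ) (by rintro (_ | _) <;> assumption)).congr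
    fun _ _ _ _ => Bool.forall_bool.trans and_comm

theorem or (hΦ : QFDefinable Φ) (hΨ : QFDefinable Ψ) :
    QFDefinable fun A₁ A₂ a₁ a₂ => Φ A₁ A₂ a₁ a₂ ∨ Ψ A₁ A₂ a₁ a₂ :=
  (iOr (Φ := fun b => bif b then Φ else Ψ) (by rintro (_ | _) <;> assumption)).congr
    fun _ _ _ _ => Bool.exists_bool.trans or_comm

end QFDefinable

theorem IsQF.qfDefinable {n : ℕ} {θ : Formula (annotV τ) n} (hθ : IsQF θ) {r₁ r₂ : ℕ}
    (g : Fin n → Fin r₁ ⊕ Fin r₂) :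
    QFDefinable fun A₁ A₂ a₁ a₂ => Sat (adu A₁ A₂) θ fun i => Sum.map a₁ a₂ (g i) := by
  induction hθ with
  | tru => exact QFDefinable.const True
  | fls => exact QFDefinable.const False
  | rel R ts =>
    cases R with
    | none =>
      exact (QFDefinable.const ((g (ts ⟨0, Nat.one_pos⟩)).isLeft = true)).congr fun _ _ _ _ => by
        simp [Sat, adu]
    | some S =>
      refine (QFDefinable.or
        (.iOr (I := {j : Fin (τ.arity S) → Fin r₁ // ∀ i, g (ts i) = .inl (j i)})
          fun j => .left (.rel S j.1))
        (.iOr (I := {j : Fin (τ.arity S) → Fin r₂ // ∀ i, g (ts i) = .inr (j i)})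
          fun j => .right (.rel S j.1))).congr fun A₁ A₂ a₁ a₂ => ?_
      exact (or_congr (Sum.exists_map_eq_inl _ _ _ _) (Sum.exists_map_eq_inr _ _ _ _)).symm
  | nrel R ts =>
    cases R with
    | none =>
      exact (QFDefinable.const ¬(g (ts ⟨0, Nat.one_pos⟩)).isLeft = true).congr fun _ _ _ _ => by
        simp [Sat, adu]
    | some S =>
      refine (QFDefinable.and
        (.iAnd (I := {j : Fin (τ.arity S) → Fin r₁ // ∀ i, g (ts i) = .inl (j i)})
          fun j => .left (.nrel S j.1))
        (.iAnd (I := {j : Fin (τ.arity S) → Fin r₂ // ∀ i, g (ts i) = .inr (j i)})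
          fun j => .right (.nrel S j.1))).congr fun A₁ A₂ a₁ a₂ => ?_
      exact ((not_congr (or_congr (Sum.exists_map_eq_inl _ _ _ _)
        (Sum.exists_map_eq_inr _ _ _ _))).trans
          (not_or.trans (and_congr not_exists not_exists))).symm
  | eq i j =>
    exact (QFDefinable.or
      (.iOr (I := {p : Fin r₁ × Fin r₁ // g i = .inl p.1 ∧ g j = .inl p.2})
        fun p => .left (.eq p.1.1 p.1.2))
      (.iOr (I := {p : Fin r₂ × Fin r₂ // g i = .inr p.1 ∧ g j = .inr p.2})
        fun p => .right (.eq p.1.1 p.1.2))).congr fun _ _ _ _ => (Sum.map_eq_map_iff _ _ _ _).symm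
  | neq i j =>
    refine (QFDefinable.and
      (.iAnd (I := {p : Fin r₁ × Fin r₁ // g i = .inl p.1 ∧ g j = .inl p.2})
        fun p => .left (.neq p.1.1 p.1.2))
      (.iAnd (I := {p : Fin r₂ × Fin r₂ // g i = .inr p.1 ∧ g j = .inr p.2})
        fun p => .right (.neq p.1.1 p.1.2))).congr fun A₁ A₂ a₁ a₂ => ?_
    exact ((not_congr (Sum.map_eq_map_iff _ _ _ _)).trans
      (not_or.trans (and_congr not_exists not_exists))).symm
  | iAnd I hI f _ ih =>
    have := hI
    exact .iAnd ih
  | iOr I hI f _ ih =>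
    have := hI
    exact .iOr ih

section Pending

def snocInl {n m : ℕ} {α : Type*} (g : Fin n → Fin m ⊕ α) : Fin (n + 1) → Fin (m + 1) ⊕ α :=
  Fin.snoc (fun i => Sum.map Fin.castSucc id (g i)) (.inl (Fin.last m))

def snocInr {n m : ℕ} {α : Type*} (g : Fin n → α ⊕ Fin m) : Fin (n + 1) → α ⊕ Fin (m + 1) :=
  Fin.snoc (fun i => Sum.map id Fin.castSucc (g i)) (.inr (Fin.last m))

theorem snoc_map_inl {n m : ℕ} {α β₁ β₂ : Type*} (F₁ : Fin m → β₁) (F₂ : α → β₂)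
    (g : Fin n → Fin m ⊕ α) (x : β₁) :
    Fin.snoc (fun i => Sum.map F₁ F₂ (g i)) (Sum.inl x) =
      fun i => Sum.map (Fin.snoc F₁ x) F₂ (snocInl g i) := by
  funext i
  refine Fin.lastCases ?_ (fun i => ?_) i
  · simp [snocInl]
  · cases g i <;> simp [snocInl]

theorem snoc_map_inr {n m : ℕ} {α β₁ β₂ : Type*} (F₁ : α → β₁) (F₂ : Fin m → β₂)
    (g : Fin n → α ⊕ Fin m) (x : β₂) :
    Fin.snoc (fun i => Sum.map F₁ F₂ (g i)) (Sum.inr x) =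
      fun i => Sum.map F₁ (Fin.snoc F₂ x) (snocInr g i) := by
  funext i
  refine Fin.lastCases ?_ (fun i => ?_) i
  · simp [snocInr]
  · cases g i <;> simp [snocInr]

variable {C₁ C₂ : Type*} {n r₁ r₂ k₁ k₂ : ℕ} (a₁ : Fin r₁ → C₁) (a₂ : Fin r₂ → C₂)
  (g : Fin n → Fin (r₁ + k₁) ⊕ Fin (r₂ + k₂)) (P : (Fin (n + 1) → C₁ ⊕ C₂) → Prop)

theorem snoc_append_inl (b₁ : Fin k₁ → C₁) (b₂ : Fin k₂ → C₂) (x : C₁) :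
    Fin.snoc (fun i => Sum.map (Fin.append a₁ b₁) (Fin.append a₂ b₂) (g i)) (Sum.inl x) =
      fun i => Sum.map (Fin.append a₁ (Fin.snoc b₁ x)) (Fin.append a₂ b₂) (snocInl g i) := by
  rw [Fin.append_snoc]
  exact snoc_map_inl _ _ _ _

theorem snoc_append_inr (b₁ : Fin k₁ → C₁) (b₂ : Fin k₂ → C₂) (x : C₂) :
    Fin.snoc (fun i => Sum.map (Fin.append a₁ b₁) (Fin.append a₂ b₂) (g i)) (Sum.inr x) =
      fun i => Sum.map (Fin.append a₁ b₁) (Fin.append a₂ (Fin.snoc b₂ x)) (snocInr g i) := by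
  rw [Fin.append_snoc]
  exact snoc_map_inr _ _ _ _

theorem exists_snoc_append_iff :
    (∃ b₁ b₂ x, P (Fin.snoc (fun i => Sum.map (Fin.append a₁ b₁) (Fin.append a₂ b₂) (g i)) x)) ↔
      (∃ b₁ : Fin (k₁ + 1) → C₁, ∃ b₂,
        P fun i => Sum.map (Fin.append a₁ b₁) (Fin.append a₂ b₂) (snocInl g i)) ∨
      (∃ b₁, ∃ b₂ : Fin (k₂ + 1) → C₂,
        P fun i => Sum.map (Fin.append a₁ b₁) (Fin.append a₂ b₂) (snocInr g i)) := by
  simp only [Sum.exists, snoc_append_inl, snoc_append_inr, Fin.exists_snoc, exists_or]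
  exact or_congr_left (exists_congr fun _ => exists_comm)

theorem forall_snoc_append_iff :
    (∀ b₁ b₂ x, P (Fin.snoc (fun i => Sum.map (Fin.append a₁ b₁) (Fin.append a₂ b₂) (g i)) x)) ↔
      (∀ b₁ : Fin (k₁ + 1) → C₁, ∀ b₂,
        P fun i => Sum.map (Fin.append a₁ b₁) (Fin.append a₂ b₂) (snocInl g i)) ∧
      (∀ b₁, ∀ b₂ : Fin (k₂ + 1) → C₂,
        P fun i => Sum.map (Fin.append a₁ b₁) (Fin.append a₂ b₂) (snocInr g i)) := by
  simp only [Sum.forall, snoc_append_inl, snoc_append_inr, Fin.forall_snoc, forall_and]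
  exact and_congr_left' (forall_congr' fun _ => forall_comm)

end Pending

section Decomposition

universe u

variable {lam : Ordinal} {n : ℕ}

/- `g` sends each free variable of `φ` either to a parameter of side `j` (the first `rⱼ` slots of
`Fin (rⱼ + kⱼ)`) or to one of `kⱼ` pending quantified variables ranging over `Aⱼ`, which the
reduction sequence has to quantify away itself; hence the `k₁ + k₂` in the rank bound. -/
def HasSigmaDecomp (lam : Ordinal) (φ : Formula (annotV τ) n) : Prop :=
  ∀ (r₁ r₂ k₁ k₂ : ℕ) (g : Fin n → Fin (r₁ + k₁) ⊕ Fin (r₂ + k₂)), ∃ D : RedSeq τ r₁ r₂,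
    D.β.NegFree ∧ D.Forall (fun _ ψ => TSigmaInf τ lam ψ ∧ rank.{u} ψ ≤ rank φ + (k₁ + k₂ : ℕ)) ∧
    D.Defines fun A₁ A₂ a₁ a₂ => ∃ b₁ b₂,
      Sat (adu A₁ A₂) φ fun i => Sum.map (Fin.append a₁ b₁) (Fin.append a₂ b₂) (g i)

def HasPiDecomp (lam : Ordinal) (φ : Formula (annotV τ) n) : Prop :=
  ∀ (r₁ r₂ k₁ k₂ : ℕ) (g : Fin n → Fin (r₁ + k₁) ⊕ Fin (r₂ + k₂)), ∃ D : RedSeq τ r₁ r₂,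
    D.β.NegFree ∧ D.Forall (fun _ ψ => TPiInf τ lam ψ ∧ rank.{u} ψ ≤ rank φ + (k₁ + k₂ : ℕ)) ∧
    D.Defines fun A₁ A₂ a₁ a₂ => ∀ b₁ b₂,
      Sat (adu A₁ A₂) φ fun i => Sum.map (Fin.append a₁ b₁) (Fin.append a₂ b₂) (g i)

theorem HasSigmaDecomp.exists_redSeq {φ : Formula (annotV τ) n} (h : HasSigmaDecomp.{u} lam φ)
    {r₁ r₂ : ℕ} (g : Fin n → Fin r₁ ⊕ Fin r₂) :
    ∃ D : RedSeq τ r₁ r₂, D.β.NegFree ∧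
      D.Forall (fun _ ψ => TSigmaInf τ lam ψ ∧ rank.{u} ψ ≤ rank φ) ∧
      D.Defines fun A₁ A₂ a₁ a₂ => Sat (adu A₁ A₂) φ fun i => Sum.map a₁ a₂ (g i) := by
  obtain ⟨D, hβ, hΔ, hD⟩ := h r₁ r₂ 0 0 g
  refine ⟨D, hβ, hΔ.mono fun _ _ h => ⟨h.1, by simpa using h.2⟩, hD.congr fun _ _ _ _ => ?_⟩
  simp [Fin.append_of_fin_zero]

theorem HasPiDecomp.exists_redSeq {φ : Formula (annotV τ) n} (h : HasPiDecomp.{u} lam φ)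
    {r₁ r₂ : ℕ} (g : Fin n → Fin r₁ ⊕ Fin r₂) :
    ∃ D : RedSeq τ r₁ r₂, D.β.NegFree ∧
      D.Forall (fun _ ψ => TPiInf τ lam ψ ∧ rank.{u} ψ ≤ rank φ) ∧
      D.Defines fun A₁ A₂ a₁ a₂ => Sat (adu A₁ A₂) φ fun i => Sum.map a₁ a₂ (g i) := by
  obtain ⟨D, hβ, hΔ, hD⟩ := h r₁ r₂ 0 0 g
  refine ⟨D, hβ, hΔ.mono fun _ _ h => ⟨h.1, by simpa using h.2⟩, hD.congr fun _ _ _ _ => ?_⟩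
  simp [Fin.append_of_fin_zero]

theorem HasSigmaDecomp.of_isQF {φ : Formula (annotV τ) n} (hφ : IsQF φ) :
    HasSigmaDecomp.{u} 0 φ := by
  intro r₁ r₂ k₁ k₂ g
  obtain ⟨D, _, hqf, hβ, hD⟩ := hφ.qfDefinable g
  refine ⟨D.exClose k₁ k₂, RedSeq.negFree_dnf _ _,
    hqf.exClose fun _ _ _ _ hc hk => ⟨TSigmaInf.exBlock_iAnd_of_isQF hc, ?_⟩, hD.exClose hβ⟩
  refine (rank_exBlock_iAnd_le (ρ := rank φ) fun j => ?_).trans (by gcongr)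
  exact (hc j).rank_eq_zero.trans_le zero_le

theorem HasPiDecomp.of_isQF {φ : Formula (annotV τ) n} (hφ : IsQF φ) :
    HasPiDecomp.{u} 0 φ := by
  intro r₁ r₂ k₁ k₂ g
  obtain ⟨D, _, hqf, hβ, hD⟩ := hφ.qfDefinable g
  refine ⟨D.allClose k₁ k₂, RedSeq.negFree_cnf _ _,
    hqf.allClose fun _ _ _ _ hc hk => ⟨TPiInf.allBlock_iOr_of_isQF hc, ?_⟩, hD.allClose hβ⟩
  refine (rank_allBlock_iOr_le (ρ := rank φ) fun j => ?_).trans (by gcongr)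
  exact (hc j).rank_eq_zero.trans_le zero_le

theorem HasSigmaDecomp.iAnd {I : Type} {f : I → Formula (annotV τ) n} {lam' : I → Ordinal}
    (hlt : ∀ i, lam' i < lam) (h : ∀ i, HasPiDecomp.{u} (lam' i) (f i)) :
    HasSigmaDecomp.{u} lam (.iAnd I f) := by
  intro r₁ r₂ k₁ k₂ g
  choose D hβ hΔ hD using fun i => (h i).exists_redSeq g
  have hΔ' : (RedSeq.iAnd I D).Forall fun _ ψ =>
      (∃ l < lam, TPiInf τ l ψ) ∧ rank.{u} ψ ≤ rank (.iAnd I f) :=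
    .iAnd fun i => (hΔ i).mono fun _ _ h =>
      ⟨⟨_, hlt i, h.1⟩, h.2.trans (le_ciSup bddAbove_of_small i)⟩
  refine ⟨(RedSeq.iAnd I D).exClose k₁ k₂, RedSeq.negFree_dnf _ _,
    hΔ'.exClose fun _ _ _ _ hc hk => ⟨TSigmaInf.exBlock_iAnd fun j => (hc j).1, ?_⟩,
    (RedSeq.Defines.iAnd hD).exClose (RedSeq.negFree_iAnd hβ)⟩
  exact (rank_exBlock_iAnd_le fun j => (hc j).2).trans (by gcongr)

theorem HasPiDecomp.iOr {I : Type} {f : I → Formula (annotV τ) n} {lam' : I → Ordinal}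
    (hlt : ∀ i, lam' i < lam) (h : ∀ i, HasSigmaDecomp.{u} (lam' i) (f i)) :
    HasPiDecomp.{u} lam (.iOr I f) := by
  intro r₁ r₂ k₁ k₂ g
  choose D hβ hΔ hD using fun i => (h i).exists_redSeq g
  have hΔ' : (RedSeq.iOr I D).Forall fun _ ψ =>
      (∃ l < lam, TSigmaInf τ l ψ) ∧ rank.{u} ψ ≤ rank (.iOr I f) :=
    .iOr fun i => (hΔ i).mono fun _ _ h =>
      ⟨⟨_, hlt i, h.1⟩, h.2.trans (le_ciSup bddAbove_of_small i)⟩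
  refine ⟨(RedSeq.iOr I D).allClose k₁ k₂, RedSeq.negFree_cnf _ _,
    hΔ'.allClose fun _ _ _ _ hc hk => ⟨TPiInf.allBlock_iOr fun j => (hc j).1, ?_⟩,
    (RedSeq.Defines.iOr hD).allClose (RedSeq.negFree_iOr hβ)⟩
  exact (rank_allBlock_iOr_le fun j => (hc j).2).trans (by gcongr)

theorem HasSigmaDecomp.ex {φ : Formula (annotV τ) (n + 1)} (h : HasSigmaDecomp.{u} lam φ) :
    HasSigmaDecomp.{u} lam (.ex φ) := by
  intro r₁ r₂ k₁ k₂ g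
  obtain ⟨D₁, hβ₁, hΔ₁, hD₁⟩ := h r₁ r₂ (k₁ + 1) k₂ (snocInl g)
  obtain ⟨D₂, hβ₂, hΔ₂, hD₂⟩ := h r₁ r₂ k₁ (k₂ + 1) (snocInr g)
  have h₁ : rank.{u} φ + (k₁ + 1 + k₂ : ℕ) = rank (.ex φ) + (k₁ + k₂ : ℕ) := by
    rw [rank]; push_cast; ring
  have h₂ : rank.{u} φ + (k₁ + (k₂ + 1) : ℕ) = rank (.ex φ) + (k₁ + k₂ : ℕ) := by
    rw [rank]; push_cast; ring
  refine ⟨D₁.or D₂, RedSeq.negFree_or hβ₁ hβ₂,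
    (hΔ₁.mono fun _ _ h => ⟨h.1, h.2.trans_eq h₁⟩).or
      (hΔ₂.mono fun _ _ h => ⟨h.1, h.2.trans_eq h₂⟩),
    fun A₁ A₂ a₁ a₂ => ?_⟩
  rw [RedSeq.models_or, ← hD₁, ← hD₂]
  exact exists_snoc_append_iff a₁ a₂ g _

theorem HasPiDecomp.all {φ : Formula (annotV τ) (n + 1)} (h : HasPiDecomp.{u} lam φ) :
    HasPiDecomp.{u} lam (.all φ) := by
  intro r₁ r₂ k₁ k₂ g
  obtain ⟨D₁, hβ₁, hΔ₁, hD₁⟩ := h r₁ r₂ (k₁ + 1) k₂ (snocInl g)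
  obtain ⟨D₂, hβ₂, hΔ₂, hD₂⟩ := h r₁ r₂ k₁ (k₂ + 1) (snocInr g)
  have h₁ : rank.{u} φ + (k₁ + 1 + k₂ : ℕ) = rank (.all φ) + (k₁ + k₂ : ℕ) := by
    rw [rank]; push_cast; ring
  have h₂ : rank.{u} φ + (k₁ + (k₂ + 1) : ℕ) = rank (.all φ) + (k₁ + k₂ : ℕ) := by
    rw [rank]; push_cast; ring
  refine ⟨D₁.and D₂, RedSeq.negFree_and hβ₁ hβ₂,
    (hΔ₁.mono fun _ _ h => ⟨h.1, h.2.trans_eq h₁⟩).and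
      (hΔ₂.mono fun _ _ h => ⟨h.1, h.2.trans_eq h₂⟩),
    fun A₁ A₂ a₁ a₂ => ?_⟩
  rw [RedSeq.models_and, ← hD₁, ← hD₂]
  exact forall_snoc_append_iff a₁ a₂ g _

variable {κ : Cardinal}

mutual
theorem TSigma.hasSigmaDecomp {lam : Ordinal} {n : ℕ} {φ : Formula (annotV τ) n} :
    TSigma (annotV τ) κ lam φ → HasSigmaDecomp.{u} lam φ
  | .qf h => .of_isQF h
  | .conj _ _ _ _ hlt h => .iAnd hlt fun i => (h i).hasPiDecomp
  | .ex h => h.hasSigmaDecomp.ex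

theorem TPi.hasPiDecomp {lam : Ordinal} {n : ℕ} {φ : Formula (annotV τ) n} :
    TPi (annotV τ) κ lam φ → HasPiDecomp.{u} lam φ
  | .qf h => .of_isQF h
  | .disj _ _ _ _ hlt h => .iOr hlt fun i => (h i).hasSigmaDecomp
  | .all h => h.hasPiDecomp.all
end

end Decomposition

end

/-- For L one of tΣ_{∞,λ}[μ] or tΠ_{∞,λ}[μ] (union over all infinite cardinals κ),
every L formula φ(x̄₁,x̄₂) over τ̱ has an L reduction sequence over τ that is a Feferman–Vaught
decomposition of φ over the annotated disjoint union operation. -/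
theorem stmt2 (τ : Vocab) [Fintype τ.Rel] (lam : Ordinal) (μ : Cardinal)
    (r₁ r₂ : ℕ) (φ : Formula (annotV τ) (r₁ + r₂)) :
    (TSigmaInf (annotV τ) lam φ → rank φ ≤ μ →
      ∃ D : RedSeq τ r₁ r₂,
        (∀ i, TSigmaInf τ lam (D.Δ₁ i) ∧ rank (D.Δ₁ i) ≤ μ) ∧
        (∀ i, TSigmaInf τ lam (D.Δ₂ i) ∧ rank (D.Δ₂ i) ≤ μ) ∧
        FVDecompADU φ D) ∧
    (TPiInf (annotV τ) lam φ → rank φ ≤ μ →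
      ∃ D : RedSeq τ r₁ r₂,
        (∀ i, TPiInf τ lam (D.Δ₁ i) ∧ rank (D.Δ₁ i) ≤ μ) ∧
        (∀ i, TPiInf τ lam (D.Δ₂ i) ∧ rank (D.Δ₂ i) ≤ μ) ∧
        FVDecompADU φ D) := by
  have hsplit {C₁ C₂ : Type} (a₁ : Fin r₁ → C₁) (a₂ : Fin r₂ → C₂) :
      (fun i => Sum.map a₁ a₂ (finSumFinEquiv.symm i)) =
        Fin.append (fun i => Sum.inl (a₁ i)) (fun i => Sum.inr (a₂ i)) :=
    funext (Fin.map_finSumFinEquiv_symm a₁ a₂)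
  constructor
  · rintro ⟨_, -, h⟩ hμ
    obtain ⟨D, -, hΔ, hD⟩ := h.hasSigmaDecomp.exists_redSeq finSumFinEquiv.symm
    exact ⟨D, fun i => ⟨(hΔ i).1.1, (hΔ i).1.2.trans hμ⟩,
      fun i => ⟨(hΔ i).2.1, (hΔ i).2.2.trans hμ⟩,
      fun A₁ A₂ a₁ a₂ => (iff_of_eq (congrArg _ (hsplit a₁ a₂).symm)).trans (hD A₁ A₂ a₁ a₂)⟩
  · rintro ⟨_, -, h⟩ hμ
    obtain ⟨D, -, hΔ, hD⟩ := h.hasPiDecomp.exists_redSeq finSumFinEquiv.symm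
    exact ⟨D, fun i => ⟨(hΔ i).1.1, (hΔ i).1.2.trans hμ⟩,
      fun i => ⟨(hΔ i).2.1, (hΔ i).2.2.trans hμ⟩,
      fun A₁ A₂ a₁ a₂ => (iff_of_eq (congrArg _ (hsplit a₁ a₂).symm)).trans (hD A₁ A₂ a₁ a₂)⟩

end FV
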